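/- arXiv:1011.1073 — 4 statements merged into one kernel-verified Lean document; each statement's English description precedes it below -/
import Mathlib

section
/- Let H be a compact Hausdorff topological group. Then the linear span of the set {Δ(f)·(g ⊗ 1) : f, g ∈ C(H)} is dense in C(H × H, ℂ) with the uniform norm, where Δ(f)(x,y) = f(xy) and (g ⊗ 1)(x,y) = g(x). -/
/-! The functions `(x, y) ↦ f (x * y) * g x` are closed under products and conjugation and contain
`1`, so their span is a unital star subalgebra of `C(H × H, ℂ)`. They separate points: `g x` tells
apart points with different first coordinates, and for equal first coordinates `x` the
cancellativity of `H` makes `f (x * y)` do so. Stone–Weierstrass then gives density. -/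

open Submodule

namespace ContinuousMap

theorem dense_span_submonoid_of_separatesPoints {X 𝕜 : Type*} [TopologicalSpace X]
    [CompactSpace X] [RCLike 𝕜] (M : Submonoid C(X, 𝕜)) (hstar : ∀ f ∈ M, star f ∈ M)
    (hsep : ((⇑) '' (M : Set C(X, 𝕜))).SeparatesPoints) :
    Dense (span 𝕜 (M : Set C(X, 𝕜)) : Set C(X, 𝕜)) := by
  set A := StarAlgebra.adjoin 𝕜 (M : Set C(X, 𝕜))
  have hspan : span 𝕜 (M : Set C(X, 𝕜)) = A.toSubalgebra.toSubmodule := by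
    rw [StarAlgebra.adjoin_eq_span, Set.union_eq_left.2 fun f hf ↦ by simpa using hstar _ hf,
      Submonoid.closure_eq]
  have hA : A.topologicalClosure = ⊤ :=
    starSubalgebra_topologicalClosure_eq_top_of_separatesPoints A
      (Set.separatesPoints_mono (Set.image_mono (StarAlgebra.subset_adjoin 𝕜 _)) hsep)
  rw [hspan]
  change Dense (A : Set C(X, 𝕜))
  rw [dense_iff_closure_eq, ← StarSubalgebra.topologicalClosure_coe, hA]
  rfl

theorem exists_apply_ne {X : Type*} (𝕜 : Type*) [TopologicalSpace X] [T35Space X] [RCLike 𝕜]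
    {a b : X} (hab : a ≠ b) : ∃ f : C(X, 𝕜), f a ≠ f b := by
  obtain ⟨f, hf, hfab⟩ := separatesPoints_continuous_of_t35Space hab
  exact ⟨⟨fun x ↦ (f x : 𝕜), RCLike.continuous_ofReal.comp hf⟩, by simpa using hfab⟩

variable (G 𝕜 : Type*) [TopologicalSpace G] [Mul G] [TopologicalSpace 𝕜] [CommMonoid 𝕜]
  [ContinuousMul 𝕜]

def comulProducts : Submonoid C(G × G, 𝕜) where
  carrier := {F | ∃ f g : C(G, 𝕜), ∀ x y : G, F (x, y) = f (x * y) * g x}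
  mul_mem' := by
    rintro _ _ ⟨f₁, g₁, h₁⟩ ⟨f₂, g₂, h₂⟩
    refine ⟨f₁ * f₂, g₁ * g₂, fun x y ↦ ?_⟩
    rw [mul_apply, mul_apply, mul_apply, h₁, h₂, mul_mul_mul_comm]
  one_mem' := ⟨1, 1, fun x y ↦ by simp⟩

variable {G 𝕜}

theorem star_mem_comulProducts [StarMul 𝕜] [ContinuousStar 𝕜] {F : C(G × G, 𝕜)}
    (hF : F ∈ comulProducts G 𝕜) : star F ∈ comulProducts G 𝕜 := by
  obtain ⟨f, g, hfg⟩ := hF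
  exact ⟨star f, star g, fun x y ↦ by rw [star_apply, star_apply, star_apply, hfg, star_mul']⟩

theorem separatesPoints_comulProducts {𝕜 : Type*} [RCLike 𝕜] [T35Space G] [IsLeftCancelMul G]
    [ContinuousMul G] : ((⇑) '' (comulProducts G 𝕜 : Set C(G × G, 𝕜))).SeparatesPoints := by
  rintro ⟨x₁, y₁⟩ ⟨x₂, y₂⟩ hne
  by_cases hx : x₁ = x₂
  · subst hx
    have hxy : x₁ * y₁ ≠ x₁ * y₂ := (mul_right_injective x₁).ne fun h ↦ hne (h ▸ rfl)
    obtain ⟨f, hf⟩ := exists_apply_ne 𝕜 hxy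
    exact ⟨_, ⟨f.comp ⟨fun p ↦ p.1 * p.2, by fun_prop⟩, ⟨f, 1, fun x y ↦ by simp⟩, rfl⟩,
      by simpa using hf⟩
  · obtain ⟨g, hg⟩ := exists_apply_ne 𝕜 hx
    exact ⟨_, ⟨g.comp .fst, ⟨1, g, fun x y ↦ by simp⟩, rfl⟩, by simpa using hg⟩

end ContinuousMap

/-- For a compact Hausdorff topological group `H`, the linear span of the
functions `(x, y) ↦ f (x * y) * g x` (i.e. `Δ(f) · (g ⊗ 1)` for `f, g ∈ C(H)`) is
dense in `C(H × H, ℂ)` with the uniform norm. -/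
theorem dense_span_comult_mul_left (H : Type*) [TopologicalSpace H] [Group H]
    [IsTopologicalGroup H] [CompactSpace H] [T2Space H] :
    Dense (Submodule.span ℂ
      {F : C(H × H, ℂ) | ∃ f g : C(H, ℂ), ∀ x y : H, F (x, y) = f (x * y) * g x} :
      Set C(H × H, ℂ)) :=
  ContinuousMap.dense_span_submonoid_of_separatesPoints (ContinuousMap.comulProducts H ℂ)
    (fun _ ↦ ContinuousMap.star_mem_comulProducts) ContinuousMap.separatesPoints_comulProducts
end

section
/- Let H = ⋃_n H_n be a countable increasing union of compact Hausdorff topological groups with the direct limit topology, where each H_n is a closed subgroup of H_{n+1}. If H itself is not compact (i.e. the union does not stabilize), then H is not locally compact, provided each H_n is nowhere dense in H_{n+1}. -/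
/-!
A compact set `C` of a sequential direct limit `X = ⋃ n, K n` of T1 spaces lies in a single
`K N`: otherwise pick `x n ∈ C \ K n`; every subset of `{x n}` meets each `K n` in a finite set,
hence is closed, so `{x n}` is a closed discrete subset of `C`, thus finite, and therefore lies in
some `K M`, which is absurd. A compact neighbourhood of a point would then give an open subset of
`K (N + 1)` inside `K N`, contradicting that `K N` is nowhere dense in `K (N + 1)`.
-/

open Set Topology

namespace Topology.IsCoherentWith

variable {X : Type*} [TopologicalSpace X] [T1Space X] {K : ℕ → Set X}

theorem isClosed_of_forall_finite_inter (hK : IsCoherentWith (range K)) {S : Set X}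
    (hS : ∀ n, (S ∩ K n).Finite) : IsClosed S := by
  refine hK.isClosed_iff.2 ?_
  rintro _ ⟨n, rfl⟩
  exact (((hS n).preimage Subtype.val_injective.injOn).subset fun y hy ↦ ⟨hy, y.2⟩).isClosed

theorem exists_subset_of_isCompact (hK : IsCoherentWith (range K)) (hmono : Monotone K)
    (hcover : ∀ x, ∃ n, x ∈ K n) {C : Set X} (hC : IsCompact C) : ∃ n, C ⊆ K n := by
  by_contra! hnot
  choose x hxC hxK using fun n ↦ not_subset.1 (hnot n)
  have hfin : ∀ n, (range x ∩ K n).Finite := by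
    refine fun n ↦ ((finite_Iio n).image x).subset ?_
    rintro _ ⟨⟨m, rfl⟩, hm⟩
    exact ⟨m, not_le.1 fun hnm ↦ hxK m (hmono hnm hm), rfl⟩
  have hdisc : IsDiscrete (range x) := isDiscrete_iff_forall_mem_exists_isClosed.2 fun s hs ↦
    ⟨s, hK.isClosed_of_forall_finite_inter fun n ↦
      (hfin n).subset (inter_subset_inter_left _ hs), inter_eq_left.2 hs⟩
  have hxfin : (range x).Finite :=
    (hC.of_isClosed_subset (hK.isClosed_of_forall_finite_inter hfin)
      (range_subset_iff.2 hxC)).finite hdisc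
  choose level hlevel using hcover
  obtain ⟨M, hM⟩ := (hxfin.image level).bddAbove
  exact hxK M (hmono (hM ⟨x M, ⟨M, rfl⟩, rfl⟩) (hlevel (x M)))

theorem not_isCompact_of_mem_nhds (hK : IsCoherentWith (range K)) (hmono : Monotone K)
    (hcover : ∀ x, ∃ n, x ∈ K n)
    (hnwd : ∀ n, interior (Subtype.val ⁻¹' K n : Set (K (n + 1))) = ∅) {x : X} {C : Set X}
    (hC : C ∈ 𝓝 x) : ¬ IsCompact C := by
  intro hCc
  obtain ⟨N, hN⟩ := hK.exists_subset_of_isCompact hmono hcover hCc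
  have hx : x ∈ K (N + 1) := hmono N.le_succ (hN (mem_of_mem_nhds hC))
  have hmem : (⟨x, hx⟩ : K (N + 1)) ∈ interior (Subtype.val ⁻¹' K N : Set (K (N + 1))) :=
    interior_maximal (t := Subtype.val ⁻¹' interior C) (fun y hy ↦ hN (interior_subset hy))
      (isOpen_interior.preimage continuous_subtype_val) (mem_interior_iff_mem_nhds.2 hC)
  simp [hnwd N] at hmem

theorem not_locallyCompactSpace [Nonempty X] (hK : IsCoherentWith (range K)) (hmono : Monotone K)
    (hcover : ∀ x, ∃ n, x ∈ K n)
    (hnwd : ∀ n, interior (Subtype.val ⁻¹' K n : Set (K (n + 1))) = ∅) :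
    ¬ LocallyCompactSpace X := by
  intro
  obtain ⟨C, hCc, hC⟩ := exists_compact_mem_nhds (Classical.arbitrary X)
  exact hK.not_isCompact_of_mem_nhds hmono hcover hnwd hC hCc

end Topology.IsCoherentWith

theorem not_locallyCompact_of_directLimit_general (H : Type*) [TopologicalSpace H] [Group H]
    [T2Space H] (K : ℕ → Subgroup H) (hmono : Monotone K)
    (hunion : ∀ x : H, ∃ n, x ∈ K n)
    (hdirlim : ∀ U : Set H, IsOpen U ↔ ∀ n, IsOpen (Subtype.val ⁻¹' U : Set (K n : Set H)))
    (hnwd : ∀ n, interior (Subtype.val ⁻¹' (K n : Set H) : Set (K (n + 1) : Set H)) = ∅) :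
    ¬ LocallyCompactSpace H :=
  IsCoherentWith.not_locallyCompactSpace (K := fun n ↦ (K n : Set H))
    ⟨fun U hU ↦ (hdirlim U).2 fun n ↦ hU _ ⟨n, rfl⟩⟩ (fun _ _ h ↦ hmono h) hunion hnwd

/-- Let `H = ⋃ n, K n` be a countable increasing union of compact
Hausdorff subgroups (each closed in the next) carrying the direct limit topology.
If the union does not stabilize and each `K n` is nowhere dense in `K (n+1)`, then
`H` is not locally compact. -/
theorem not_locallyCompact_of_directLimit (H : Type*) [TopologicalSpace H] [Group H]
    [IsTopologicalGroup H] [T2Space H] (K : ℕ → Subgroup H) (hmono : Monotone K)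
    (hcompact : ∀ n, IsCompact (K n : Set H))
    (hclosed : ∀ n, IsClosed (Subtype.val ⁻¹' (K n : Set H) : Set (K (n + 1) : Set H)))
    (hunion : ∀ x : H, ∃ n, x ∈ K n)
    (hdirlim : ∀ U : Set H, IsOpen U ↔ ∀ n, IsOpen (Subtype.val ⁻¹' U : Set (K n : Set H)))
    (hproper : ∀ n, (K n : Set H) ≠ Set.univ)
    (hnwd : ∀ n, interior (Subtype.val ⁻¹' (K n : Set H) : Set (K (n + 1) : Set H)) = ∅) :
    ¬ LocallyCompactSpace H :=
  not_locallyCompact_of_directLimit_general H K hmono hunion hdirlim hnwd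
end

section
/- Let A be a commutative unital complex ⋆-algebra which is the inverse limit of a countable inverse system of commutative unital C*-algebras C(X_n) with surjective unital ⋆-homomorphisms induced by closed embeddings X_{n-1} ↪ X_n of compact Hausdorff spaces. Then A is ⋆-isomorphic to C(X) where X = ⋃_n X_n with the direct limit topology, via f ↦ (f|_{X_n})_n. -/
/-!
Restriction is injective because the `K n` cover `X`. A coherent sequence `(F n)` agrees on
overlaps, so it glues along this cover to a function on `X`, and the direct limit topology says
precisely that a function on `X` is continuous as soon as all its restrictions to the `K n` are.
-/

/-- The continuous inclusion `K n → K (n+1)` for a monotone family of subsets. -/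
def setIncl {X : Type*} [TopologicalSpace X] (K : ℕ → Set X) (hmono : Monotone K)
    (n : ℕ) : C(K n, K (n + 1)) :=
  ⟨fun x => ⟨x.1, hmono (Nat.le_succ n) x.2⟩, by
    exact Continuous.subtype_mk continuous_subtype_val _⟩

/-- Restriction of a continuous function on `X` to the subspace `K n`. -/
noncomputable def restrictToSet {X : Type*} [TopologicalSpace X] (K : ℕ → Set X) (n : ℕ)
    (f : C(X, ℂ)) : C(K n, ℂ) :=
  f.comp ⟨Subtype.val, continuous_subtype_val⟩

open Topology

section Coherent

variable {X Y : Type*} [TopologicalSpace X] [TopologicalSpace Y] {K : ℕ → Set X}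

theorem isCoherentWith_range_of_isOpen_iff
    (hdirlim : ∀ U : Set X, IsOpen U ↔ ∀ n, IsOpen (Subtype.val ⁻¹' U : Set (K n))) :
    IsCoherentWith (Set.range K) :=
  ⟨fun U hU => (hdirlim U).2 fun n => hU _ ⟨n, rfl⟩⟩

theorem setIncl_coherent_apply_of_le (hmono : Monotone K) {F : ∀ n, C(K n, Y)}
    (hF : ∀ n, (F (n + 1)).comp (setIncl K hmono n) = F n)
    {m n : ℕ} (hmn : m ≤ n) (x : X) (hx : x ∈ K m) :
    F n ⟨x, hmono hmn hx⟩ = F m ⟨x, hx⟩ := by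
  induction n, hmn using Nat.le_induction with
  | base => rfl
  | succ n hmn ih => exact (DFunLike.congr_fun (hF n) ⟨x, hmono hmn hx⟩).trans ih

theorem setIncl_coherent_apply (hmono : Monotone K) {F : ∀ n, C(K n, Y)}
    (hF : ∀ n, (F (n + 1)).comp (setIncl K hmono n) = F n)
    {m n : ℕ} (x : X) (hxm : x ∈ K m) (hxn : x ∈ K n) :
    F m ⟨x, hxm⟩ = F n ⟨x, hxn⟩ := by
  rcases le_total m n with hmn | hnm
  · exact (setIncl_coherent_apply_of_le hmono hF hmn x hxm).symm
  · exact setIncl_coherent_apply_of_le hmono hF hnm x hxn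

noncomputable def glueCoherent (hmono : Monotone K) (F : ∀ n, C(K n, Y))
    (hF : ∀ n, (F (n + 1)).comp (setIncl K hmono n) = F n)
    (hunion : ∀ x : X, ∃ n, x ∈ K n)
    (hdirlim : ∀ U : Set X, IsOpen U ↔ ∀ n, IsOpen (Subtype.val ⁻¹' U : Set (K n))) :
    C(X, Y) where
  toFun := Set.liftCover K (fun n => F n) (fun _ _ => setIncl_coherent_apply hmono hF)
    (Set.iUnion_eq_univ_iff.2 hunion)
  continuous_toFun := by
    refine (isCoherentWith_range_of_isOpen_iff hdirlim).continuous_iff.2 ?_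
    rintro _ ⟨n, rfl⟩
    rw [continuousOn_iff_continuous_domRestrict]
    convert (F n).continuous using 1
    exact funext fun x => Set.liftCover_coe x

theorem glueCoherent_comp_val (hmono : Monotone K) (F : ∀ n, C(K n, Y))
    (hF : ∀ n, (F (n + 1)).comp (setIncl K hmono n) = F n)
    (hunion : ∀ x : X, ∃ n, x ∈ K n)
    (hdirlim : ∀ U : Set X, IsOpen U ↔ ∀ n, IsOpen (Subtype.val ⁻¹' U : Set (K n))) (n : ℕ) :
    (glueCoherent hmono F hF hunion hdirlim).comp ⟨Subtype.val, continuous_subtype_val⟩ = F n :=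
  ContinuousMap.ext fun x => by simp [glueCoherent]

end Coherent

section Restrict

variable {X : Type*} [TopologicalSpace X] {K : ℕ → Set X}

theorem restrictToSet_injective (hunion : ∀ x : X, ∃ n, x ∈ K n) :
    Function.Injective (fun f : C(X, ℂ) => fun n => restrictToSet K n f) := by
  intro f g hfg
  ext x
  obtain ⟨n, hx⟩ := hunion x
  exact DFunLike.congr_fun (congrFun hfg n) ⟨x, hx⟩

theorem range_restrictToSet (hmono : Monotone K) (hunion : ∀ x : X, ∃ n, x ∈ K n)
    (hdirlim : ∀ U : Set X, IsOpen U ↔ ∀ n, IsOpen (Subtype.val ⁻¹' U : Set (K n))) :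
    Set.range (fun f : C(X, ℂ) => fun n => restrictToSet K n f) =
      {F : ∀ n, C(K n, ℂ) | ∀ n, (F (n + 1)).comp (setIncl K hmono n) = F n} := by
  ext F
  constructor
  · rintro ⟨f, rfl⟩ n
    rfl
  · intro hF
    exact ⟨glueCoherent hmono F hF hunion hdirlim,
      funext (glueCoherent_comp_val hmono F hF hunion hdirlim)⟩

end Restrict

theorem starAlgebra_iso_inverseLimit_general (X : Type*) [TopologicalSpace X]
    (K : ℕ → Set X) (hmono : Monotone K)
    (hunion : ∀ x : X, ∃ n, x ∈ K n)
    (hdirlim : ∀ U : Set X, IsOpen U ↔ ∀ n, IsOpen (Subtype.val ⁻¹' U : Set (K n))) :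
    (Function.Injective (fun f : C(X, ℂ) => fun n => restrictToSet K n f)) ∧
    (Set.range (fun f : C(X, ℂ) => fun n => restrictToSet K n f) =
      {F : ∀ n, C(K n, ℂ) | ∀ n, (F (n + 1)).comp (setIncl K hmono n) = F n}) ∧
    (∀ f g : C(X, ℂ), ∀ n, restrictToSet K n (f * g) = restrictToSet K n f * restrictToSet K n g) ∧
    (∀ f g : C(X, ℂ), ∀ n, restrictToSet K n (f + g) = restrictToSet K n f + restrictToSet K n g) ∧
    (∀ n, restrictToSet K n (1 : C(X, ℂ)) = 1) ∧
    (∀ (c : ℂ) (f : C(X, ℂ)) (n : ℕ), restrictToSet K n (c • f) = c • restrictToSet K n f) ∧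
    (∀ f : C(X, ℂ), ∀ n, restrictToSet K n (star f) = star (restrictToSet K n f)) :=
  ⟨restrictToSet_injective hunion, range_restrictToSet hmono hunion hdirlim,
    fun _ _ _ => rfl, fun _ _ _ => rfl, fun _ => rfl, fun _ _ _ => rfl, fun _ _ => rfl⟩

/-- Let `X = ⋃ n, K n` be a countable increasing union of compact
Hausdorff (closed) subspaces, with the direct limit topology.  Then the commutative
unital ⋆-algebra `lim← C(K n, ℂ)` (inverse limit of the system of surjective
restriction ⋆-homomorphisms induced by the closed embeddings `K n ↪ K (n+1)`) is
⋆-isomorphic to `C(X, ℂ)` via `f ↦ (f|_{K n})ₙ`: this map is an injective ⋆-algebra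
homomorphism whose range is exactly the set of coherent sequences. -/
theorem starAlgebra_iso_inverseLimit (X : Type*) [TopologicalSpace X] [T2Space X]
    (K : ℕ → Set X) (hmono : Monotone K)
    (hcompact : ∀ n, IsCompact (K n))
    (hclosed : ∀ n, IsClosed (K n))
    (hunion : ∀ x : X, ∃ n, x ∈ K n)
    (hdirlim : ∀ U : Set X, IsOpen U ↔ ∀ n, IsOpen (Subtype.val ⁻¹' U : Set (K n))) :
    (Function.Injective (fun f : C(X, ℂ) => fun n => restrictToSet K n f)) ∧
    (Set.range (fun f : C(X, ℂ) => fun n => restrictToSet K n f) =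
      {F : ∀ n, C(K n, ℂ) | ∀ n, (F (n + 1)).comp (setIncl K hmono n) = F n}) ∧
    (∀ f g : C(X, ℂ), ∀ n, restrictToSet K n (f * g) = restrictToSet K n f * restrictToSet K n g) ∧
    (∀ f g : C(X, ℂ), ∀ n, restrictToSet K n (f + g) = restrictToSet K n f + restrictToSet K n g) ∧
    (∀ n, restrictToSet K n (1 : C(X, ℂ)) = 1) ∧
    (∀ (c : ℂ) (f : C(X, ℂ)) (n : ℕ), restrictToSet K n (c • f) = c • restrictToSet K n f) ∧
    (∀ f : C(X, ℂ), ∀ n, restrictToSet K n (star f) = star (restrictToSet K n f)) :=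
  starAlgebra_iso_inverseLimit_general X K hmono hunion hdirlim
end

section
/- Let X be a topological space written as a countable increasing union X = ⋃_n X_n of compact Hausdorff subspaces with the direct limit topology (U open iff U ∩ X_n open in X_n for all n), and assume X is Hausdorff. Then every ⋆-homomorphism κ : C(X,ℂ) → ℂ which is unital (i.e. a character) factors through some restriction map C(X) → C(X_n), i.e. there exist n and a point x ∈ X_n such that κ(f) = f(x) for all f ∈ C(X). -/
open Complex in
/-- Let `X = ⋃ n, K n` be a countable increasing union of compact
Hausdorff subspaces with the direct limit topology, with `X` Hausdorff.  Then every
character `κ : C(X, ℂ) → ℂ` (unital ⋆-algebra homomorphism) is evaluation at a point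
of some `K n`, i.e. it factors through a restriction map `C(X) → C(K n)`. -/
theorem character_factors_through_restriction (X : Type*) [TopologicalSpace X]
    [T2Space X] (K : ℕ → Set X) (hmono : Monotone K)
    (hcompact : ∀ n, IsCompact (K n))
    (hunion : ∀ x : X, ∃ n, x ∈ K n)
    (hdirlim : ∀ U : Set X, IsOpen U ↔ ∀ n, IsOpen (Subtype.val ⁻¹' U : Set (K n)))
    (κ : C(X, ℂ) →⋆ₐ[ℂ] ℂ) :
    ∃ (n : ℕ) (x : X), x ∈ K n ∧ ∀ f : C(X, ℂ), κ f = f x := by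
  classical
  have contX : ∀ g : X → ℂ, (∀ n, Continuous fun y : K n => g y.1) → Continuous g := by
    intro g hg
    rw [continuous_def]
    intro U hU
    rw [hdirlim]
    intro n
    exact (hg n).isOpen_preimage U hU
  have hss : ∀ f : C(X, ℂ), κ (star f * f) = (normSq (κ f) : ℂ) := by
    intro f
    rw [map_mul, map_star, normSq_eq_conj_mul_self]
    rfl
  have key : ∃ n, ∀ f : C(X, ℂ), (∀ x ∈ K n, f x = 0) → κ f = 0 := by
    by_contra hcon
    push_neg at hcon
    choose f hf0 hfκ using hcon
    set g : ℕ → C(X, ℂ) := fun n => ((normSq (κ (f n)) : ℂ))⁻¹ • (star (f n) * f n) with hgdef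
    -- values of g
    have hgval : ∀ n x, g n x = ((normSq (κ (f n)))⁻¹ * normSq (f n x) : ℝ) := by
      intro n x
      simp [hgdef, normSq_eq_conj_mul_self]
    have hκg : ∀ n, κ (g n) = 1 := by
      intro n
      have hne : (normSq (κ (f n)) : ℂ) ≠ 0 := by
        simpa [normSq_eq_zero] using hfκ n
      rw [hgdef]
      simp only [map_smul, hss, smul_eq_mul]
      exact inv_mul_cancel₀ hne
    -- vanishing
    have hgzero : ∀ m n : ℕ, m ≤ n → ∀ x ∈ K m, g n x = 0 := by
      intro m n hmn x hx
      have : f n x = 0 := hf0 n x (hmono hmn hx)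
      rw [hgval, this]
      simp
    -- pointwise finite support
    have hsupp : ∀ x : X, ∃ m, ∀ n, m ≤ n → g n x = 0 := by
      intro x
      obtain ⟨m, hm⟩ := hunion x
      exact ⟨m, fun n hn => hgzero m n hn x hm⟩
    have hsummable : ∀ x : X, Summable fun n => g n x := by
      intro x
      obtain ⟨m, hm⟩ := hsupp x
      exact summable_of_ne_finset_zero (s := Finset.range m)
        (fun n hn => hm n (by simpa using hn))
    have htsum : ∀ (x : X) (m : ℕ), (∀ n, m ≤ n → g n x = 0) →
        ∑' n, g n x = ∑ n ∈ Finset.range m, g n x := by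
      intro x m hm
      exact tsum_eq_sum (fun n hn => hm n (by simpa using hn))
    -- continuity of h
    have hcont : Continuous fun x => ∑' n, g n x := by
      apply contX
      intro n
      have : (fun y : K n => ∑' j, g j y.1) = fun y : K n => ∑ j ∈ Finset.range n, g j y.1 := by
        funext y
        exact htsum y.1 n (fun j hj => hgzero n j hj y.1 y.2)
      rw [this]
      exact continuous_finset_sum _ (fun j _ => (g j).continuous.comp continuous_subtype_val)
    set h : C(X, ℂ) := ⟨fun x => ∑' n, g n x, hcont⟩ with hhdef
    -- for each N, h - partial sum is a "square"
    have hge : ∀ N : ℕ, (N : ℝ) ≤ (κ h).re := by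
      intro N
      set r : C(X, ℂ) := h - ∑ j ∈ Finset.range N, g j with hrdef
      have hrval : ∀ x : X, ∃ t : ℝ, 0 ≤ t ∧ r x = (t : ℂ) := by
        intro x
        obtain ⟨m, hm⟩ := hsupp x
        set M := max m N with hM
        have hmM : ∀ n, M ≤ n → g n x = 0 := fun n hn => hm n (le_trans (le_max_left _ _) hn)
        have h1 : h x = ∑ n ∈ Finset.range M, g n x := htsum x M hmM
        have h2 : r x = ∑ n ∈ Finset.range M, g n x - ∑ n ∈ Finset.range N, g n x := by
          simp [hrdef, h1]
        have h3 : r x = ∑ n ∈ Finset.range M \ Finset.range N, g n x := by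
          rw [h2, sub_eq_iff_eq_add]
          exact (Finset.sum_sdiff (Finset.range_subset_range.2 (le_max_right _ _))).symm
        refine ⟨∑ n ∈ Finset.range M \ Finset.range N,
          (normSq (κ (f n)))⁻¹ * normSq (f n x), ?_, ?_⟩
        · exact Finset.sum_nonneg fun n _ => mul_nonneg (inv_nonneg.2 (normSq_nonneg _)) (normSq_nonneg _)
        · rw [h3, ofReal_sum]
          exact Finset.sum_congr rfl fun n _ => hgval n x
      -- square root
      set s : C(X, ℂ) := ⟨fun x => (Real.sqrt ((r x).re) : ℂ), by
        exact continuous_ofReal.comp (Real.continuous_sqrt.comp (continuous_re.comp r.continuous))⟩ with hsdef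
      have hsq : star s * s = r := by
        ext x
        obtain ⟨t, ht0, ht⟩ := hrval x
        have hre : (r x).re = t := by rw [ht]; simp
        simp only [ContinuousMap.mul_apply, ContinuousMap.star_apply, hsdef, ContinuousMap.coe_mk,
          star_def, ht, ofReal_re]
        rw [conj_ofReal, ← ofReal_mul, Real.mul_self_sqrt ht0]
      have hκr : κ r = (normSq (κ s) : ℂ) := by rw [← hsq]; exact hss s
      have hhr : κ h = κ r + N := by
        have : h = r + ∑ j ∈ Finset.range N, g j := by rw [hrdef]; ring
        rw [this, map_add, map_sum]
        simp [hκg]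
      rw [hhr, hκr]
      simp [normSq_nonneg]
    obtain ⟨N, hN⟩ := exists_nat_gt (κ h).re
    exact absurd (hge N) (not_le.2 hN)
  obtain ⟨n, hker⟩ := key
  have main : ∃ x : X, x ∈ K n ∧ ∀ f : C(X, ℂ), κ f = f x := by
    -- the finite intersection property
    have FIP : ∀ u : Finset C(X, ℂ), (∀ f ∈ u, κ f = 0) →
        (K n ∩ ⋂ f ∈ u, (f : X → ℂ) ⁻¹' {0}).Nonempty := by
      intro u hu
      by_contra hempty
      -- g := ∑ star f * f, positive on K n
      set g : C(X, ℂ) := ∑ f ∈ u, star f * f with hgdef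
      have hκg : κ g = 0 := by
        rw [hgdef, map_sum]
        refine Finset.sum_eq_zero fun f hf => ?_
        rw [hss, hu f hf]
        simp
      have hgval : ∀ x : X, g x = (∑ f ∈ u, normSq (f x) : ℝ) := by
        intro x
        rw [hgdef]
        push_cast
        simp [normSq_eq_conj_mul_self]
      have hgpos : ∀ x ∈ K n, 0 < (g x).re := by
        intro x hx
        have hne : ∃ f ∈ u, f x ≠ 0 := by
          by_contra hall
          push_neg at hall
          exact hempty ⟨x, hx, Set.mem_iInter₂.2 fun f hf => hall f hf⟩
        obtain ⟨f0, hf0u, hf0⟩ := hne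
        rw [hgval]
        simp only [ofReal_re]
        refine Finset.sum_pos' (fun f _ => normSq_nonneg _) ⟨f0, hf0u, ?_⟩
        simpa [normSq_pos] using hf0
      -- K n nonempty (else κ 1 = 0)
      have hKne : (K n).Nonempty := by
        by_contra hKe
        rw [Set.not_nonempty_iff_eq_empty] at hKe
        have : κ (1 : C(X, ℂ)) = 0 := hker 1 (by simp [hKe])
        simp at this
      -- min of re ∘ g on K n
      obtain ⟨x₀, hx₀K, hx₀min⟩ := (hcompact n).exists_isMinOn hKne
        ((continuous_re.comp g.continuous).continuousOn)
      set ε : ℝ := (g x₀).re with hεdef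
      have hεpos : 0 < ε := hgpos x₀ hx₀K
      -- truncated function G
      set G : C(X, ℂ) := ⟨fun x => ((max ((g x).re) ε : ℝ) : ℂ),
        continuous_ofReal.comp ((continuous_re.comp g.continuous).max continuous_const)⟩ with hGdef
      have hGg : ∀ x ∈ K n, G x = g x := by
        intro x hx
        have h1 : ε ≤ (g x).re := hx₀min hx
        have h2 : (g x).im = 0 := by rw [hgval]; simp
        simp only [hGdef, ContinuousMap.coe_mk, max_eq_left h1]
        exact Complex.ext (by simp) (by simp [h2])
      have hκG : κ G = 0 := by
        have : κ (G - g) = 0 := hker _ (fun x hx => by simp [hGg x hx])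
        rw [map_sub, hκg, sub_zero] at this
        exact this
      -- G is invertible
      have hGinv : ∃ Gi : C(X, ℂ), G * Gi = 1 := by
        refine ⟨⟨fun x => ((max ((g x).re) ε : ℝ) : ℂ)⁻¹,
          Continuous.inv₀ (continuous_ofReal.comp
            ((continuous_re.comp g.continuous).max continuous_const)) ?_⟩, ?_⟩
        · intro x
          have : (0 : ℝ) < max ((g x).re) ε := lt_max_of_lt_right hεpos
          exact_mod_cast this.ne'
        · ext x
          have : ((max ((g x).re) ε : ℝ) : ℂ) ≠ 0 := by
            have : (0 : ℝ) < max ((g x).re) ε := lt_max_of_lt_right hεpos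
            exact_mod_cast this.ne'
          simp [hGdef, mul_inv_cancel₀ this]
      obtain ⟨Gi, hGi⟩ := hGinv
      have : (1 : ℂ) = 0 := by
        have := congrArg κ hGi
        rw [map_mul, map_one, hκG, zero_mul] at this
        exact this.symm
      exact one_ne_zero this
    -- compactness: common zero exists
    have hclosed : ∀ f : C(X, ℂ), IsClosed ((f : X → ℂ) ⁻¹' {0}) :=
      fun f => isClosed_singleton.preimage f.continuous
    have hinter : (K n ∩ ⋂ f : {f : C(X, ℂ) // κ f = 0}, ((f : C(X, ℂ)) : X → ℂ) ⁻¹' {0}).Nonempty := by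
      apply (hcompact n).inter_iInter_nonempty
        (fun f : {f : C(X, ℂ) // κ f = 0} => ((f : C(X, ℂ)) : X → ℂ) ⁻¹' {0})
        (fun f => hclosed f.1)
      intro u
      have := FIP (u.image Subtype.val) (by
        intro f hf
        obtain ⟨f', _, rfl⟩ := Finset.mem_image.1 hf
        exact f'.2)
      obtain ⟨x, hxK, hx⟩ := this
      refine ⟨x, hxK, Set.mem_iInter₂.2 fun f hf => ?_⟩
      exact Set.mem_iInter₂.1 hx f.1 (Finset.mem_image_of_mem _ hf)
    obtain ⟨x, hxK, hx⟩ := hinter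
    refine ⟨x, hxK, fun f => ?_⟩
    have hmem : κ (f - κ f • 1) = 0 := by
      rw [map_sub, map_smul, map_one, smul_eq_mul, mul_one, sub_self]
    have := Set.mem_iInter.1 hx ⟨f - κ f • 1, hmem⟩
    simp only [Set.mem_preimage, Set.mem_singleton_iff] at this
    have : f x - κ f = 0 := by simpa using this
    linear_combination -this
  obtain ⟨x, hxK, hx⟩ := main
  exact ⟨n, x, hxK, hx⟩
end
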